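/- For any cause-respecting RPES E over L, the configuration transition system TC(E) and the residual transition system TE(E) are bisimilar, via the relation R = {(last(t), E \ t) | t ∈ Traces(E)}. -/

import Mathlib

/-- Data of a (labeled) reversible prime event structure (RPES) over actions `L`:
a carrier set of events, causality `lt`, conflict `conf`, labeling, a set `F` of
reversible events, reverse causality `rc` (`rc e u` means `e ≺ u̲`), prevention
`prev` (`prev e u` means `e ▷ u̲`), and an initial configuration `C0`. -/
structure RPESData (E : Type) (L : Type) where
  carrier : Set E
  lt : E → E → Prop
  conf : E → E → Prop
  label : E → L
  F : Set E
  rc : E → E → Prop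
  prev : E → E → Prop
  C0 : Set E

/-- Data of a (labeled) prime event structure (PES) with empty initial configuration. -/
structure PESData (E : Type) (L : Type) where
  carrier : Set E
  lt : E → E → Prop
  conf : E → E → Prop
  label : E → L

namespace RPESData

variable {E : Type} {L : Type}

/-- A set of events is conflict-free. -/
def ConflictFree (R : RPESData E L) (X : Set E) : Prop :=
  ∀ e ∈ X, ∀ e' ∈ X, ¬ R.conf e e'

/-- Sustained causation: `a ≪ b` iff `a < b` and, if `a` is reversible, `b ▷ a̲`. -/
def SC (R : RPESData E L) (a b : E) : Prop :=
  R.lt a b ∧ (a ∈ R.F → R.prev b a)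

/-- The axioms of a reversible prime event structure. -/
structure IsRPES (R : RPESData E L) : Prop where
  countable : R.carrier.Countable
  lt_carrier : ∀ a b, R.lt a b → a ∈ R.carrier ∧ b ∈ R.carrier
  conf_carrier : ∀ a b, R.conf a b → a ∈ R.carrier ∧ b ∈ R.carrier
  conf_irrefl : ∀ a, ¬ R.conf a a
  conf_symm : ∀ a b, R.conf a b → R.conf b a
  lt_irrefl : ∀ a, ¬ R.lt a a
  lt_trans : ∀ a b c, R.lt a b → R.lt b c → R.lt a c
  causes_finite : ∀ e, {e' | R.lt e' e}.Finite
  causes_cf : ∀ e, R.ConflictFree {e' | R.lt e' e}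
  F_carrier : R.F ⊆ R.carrier
  rc_carrier : ∀ a b, R.rc a b → a ∈ R.carrier ∧ b ∈ R.F
  rc_refl : ∀ u ∈ R.F, R.rc u u
  rcauses_finite : ∀ u ∈ R.F, {e | R.rc e u}.Finite
  rcauses_cf : ∀ u ∈ R.F, R.ConflictFree {e | R.rc e u}
  prev_carrier : ∀ a b, R.prev a b → a ∈ R.carrier ∧ b ∈ R.F
  prev_rc_disjoint : ∀ a b, ¬ (R.prev a b ∧ R.rc a b)
  sc_trans : ∀ a b c, R.SC a b → R.SC b c → R.SC a c
  conf_hered_sc : ∀ a b c, R.conf a b → R.SC b c → R.conf a c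
  C0_carrier : R.C0 ⊆ R.carrier
  C0_finite : R.C0.Finite
  C0_closed : ∀ e ∈ R.C0, ∀ e', R.lt e' e → e' ∈ R.C0
  C0_cf : R.ConflictFree R.C0

/-- A cause-respecting RPES: causality is sustained causation. -/
def CauseRespecting (R : RPESData E L) : Prop :=
  ∀ a b, R.lt a b → R.SC a b

/-- A causal RPES. -/
def Causal (R : RPESData E L) : Prop :=
  (∀ e, ∀ u ∈ R.F, (R.rc e u ↔ e = u)) ∧
  (∀ e, ∀ u ∈ R.F, (R.prev e u ↔ R.lt u e))

/-- The mixed step `A ∪ B̲` is enabled at configuration `C`. -/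
def Enabled (R : RPESData E L) (C A B : Set E) : Prop :=
  A.Finite ∧ B.Finite ∧ A ⊆ R.carrier ∧ B ⊆ R.F ∧
  A ∩ C = ∅ ∧ B ⊆ C ∧ R.ConflictFree (C ∪ A) ∧
  (∀ e ∈ A, ∀ e', R.lt e' e → e' ∈ C \ B) ∧
  (∀ e ∈ B, ∀ e', R.rc e' e → e' ∈ C \ (B \ {e})) ∧
  (∀ e ∈ B, ∀ e', R.prev e' e → e' ∉ C ∪ A)

/-- `IsTraceFrom R C t C'`: the sequence of mixed steps `t` can be executed
starting at `C`, ending in `C'`. -/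
def IsTraceFrom (R : RPESData E L) : Set E → List (Set E × Set E) → Set E → Prop
  | C, [], C' => C' = C
  | C, p :: t, C' => R.Enabled C p.1 p.2 ∧ R.IsTraceFrom ((C \ p.2) ∪ p.1) t C'

/-- `t` is a trace of `R` with `last(t) = C`. -/
def IsTraceTo (R : RPESData E L) (t : List (Set E × Set E)) (C : Set E) : Prop :=
  R.IsTraceFrom R.C0 t C

/-- `t` is a trace of `R`. -/
def IsTrace (R : RPESData E L) (t : List (Set E × Set E)) : Prop :=
  ∃ C, R.IsTraceTo t C

/-- Reachable configurations: obtained from `C0` by mixed steps. -/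
inductive ReachConf (R : RPESData E L) : Set E → Prop
  | init : ReachConf R R.C0
  | step : ∀ C A B, ReachConf R C → R.Enabled C A B → ReachConf R ((C \ B) ∪ A)

/-- Forwards reachable configurations: obtained from `C0` by forward steps only. -/
inductive FwdReachConf (R : RPESData E L) : Set E → Prop
  | init : FwdReachConf R R.C0
  | step : ∀ C A, FwdReachConf R C → R.Enabled C A ∅ → FwdReachConf R ((C \ ∅) ∪ A)

/-- The one-step removal operator: the residual of `R` after the step `A ∪ B̲`. -/
def residStep (R : RPESData E L) (A B : Set E) : RPESData E L :=
  let At : Set E := (A \ R.F) ∪ {a | a ∈ R.F ∧ ∃ x ∈ A \ R.F, R.lt a x}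
  let CA : Set E := {e | e ∈ R.carrier ∧ ∃ a ∈ At, R.conf e a}
  let E' : Set E := R.carrier \ (At ∪ CA)
  let F' : Set E := (R.F ∩ E') \
    ({e | e ∈ R.F ∧ ∃ a ∈ CA, R.rc a e} ∪ {e | e ∈ R.F ∧ ∃ a ∈ At, R.prev a e})
  { carrier := E'
    lt := fun a b => R.lt a b ∧ a ∈ E' ∧ b ∈ E'
    conf := fun a b => R.conf a b ∧ a ∈ E' ∧ b ∈ E'
    label := R.label
    F := F'
    rc := fun a b => R.rc a b ∧ a ∈ E' ∧ b ∈ F'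
    prev := fun a b => R.prev a b ∧ a ∈ E' ∧ b ∈ F'
    C0 := ((R.C0 \ B) ∪ A) ∩ E' }

/-- The residual `R \ t` of `R` after a trace `t`. -/
def resid (R : RPESData E L) (t : List (Set E × Set E)) : RPESData E L :=
  t.foldl (fun S p => S.residStep p.1 p.2) R

/-- The multiset (as a function `L → ℕ`) of action labels of the step `A ∪ B̲`. -/
noncomputable def stepLabel (R : RPESData E L) (A B : Set E) : L → ℕ :=
  fun a => Nat.card {e : E // e ∈ A ∪ B ∧ R.label e = a}

/-- Forgetting the reversibility structure. -/
def toPES (R : RPESData E L) : PESData E L :=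
  ⟨R.carrier, R.lt, R.conf, R.label⟩

end RPESData

namespace PESData

variable {E : Type} {L : Type}

/-- The axioms of a prime event structure. -/
structure IsPES (P : PESData E L) : Prop where
  countable : P.carrier.Countable
  lt_carrier : ∀ a b, P.lt a b → a ∈ P.carrier ∧ b ∈ P.carrier
  conf_carrier : ∀ a b, P.conf a b → a ∈ P.carrier ∧ b ∈ P.carrier
  lt_irrefl : ∀ a, ¬ P.lt a a
  lt_trans : ∀ a b c, P.lt a b → P.lt b c → P.lt a c
  causes_finite : ∀ e, {e' | P.lt e' e}.Finite
  conf_irrefl : ∀ a, ¬ P.conf a a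
  conf_symm : ∀ a b, P.conf a b → P.conf b a
  conf_hered : ∀ a b c, P.conf a b → P.lt b c → P.conf a c

/-- `φ(E, F)`: the RPES obtained from a PES by declaring the events in `F`
reversible, with `e ≺ e̲` for `e ∈ F` and `e ▷ e̲'` whenever `e' ∈ F`, `e' < e`. -/
def toRPES (P : PESData E L) (F : Set E) : RPESData E L :=
  { carrier := P.carrier
    lt := P.lt
    conf := P.conf
    label := P.label
    F := F
    rc := fun e u => u ∈ F ∧ e = u
    prev := fun e u => u ∈ F ∧ P.lt u e
    C0 := ∅ }

end PESData

/-- A labeled transition system. -/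
structure LTS (S : Type) (Λ : Type) where
  tr : S → Λ → S → Prop
  init : S

/-- Bisimulation between labeled transition systems. -/
def IsBisimulation {S S' Λ : Type} (T : LTS S Λ) (T' : LTS S' Λ)
    (Rl : S → S' → Prop) : Prop :=
  Rl T.init T'.init ∧
  (∀ s s', Rl s s' → ∀ M s₁, T.tr s M s₁ → ∃ s₁', T'.tr s' M s₁' ∧ Rl s₁ s₁') ∧
  (∀ s s', Rl s s' → ∀ M s₁', T'.tr s' M s₁' → ∃ s₁, T.tr s M s₁ ∧ Rl s₁ s₁')

namespace RPESData

variable {E : Type} {L : Type}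

/-- Transition relation of the configuration transition system `TC(R)`. -/
def confTr (R : RPESData E L) (C : Set E) (M : L → ℕ) (C' : Set E) : Prop :=
  R.ReachConf C ∧ ∃ A B, R.Enabled C A B ∧ C' = (C \ B) ∪ A ∧ M = R.stepLabel A B

/-- The configuration transition system `TC(R)`. -/
def TC (R : RPESData E L) : LTS (Set E) (L → ℕ) :=
  ⟨R.confTr, R.C0⟩

/-- Transition relation between residuals: `F ⇀^M F'` iff `F' = F \ (A ∪ B̲)` for
a one-step trace `A ∪ B̲` of `F` with label multiset `M`. -/
def residTr (R' : RPESData E L) (M : L → ℕ) (R'' : RPESData E L) : Prop :=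
  ∃ A B, R'.Enabled R'.C0 A B ∧ R'' = R'.residStep A B ∧ M = R'.stepLabel A B

/-- Residuals reachable from `R` via `residTr`. -/
inductive ReachRes (R : RPESData E L) : RPESData E L → Prop
  | init : ReachRes R R
  | step : ∀ R' M R'', ReachRes R R' → residTr R' M R'' → ReachRes R R''

/-- The residual transition system `TE(R)`. -/
def TE (R : RPESData E L) : LTS (RPESData E L) (L → ℕ) :=
  ⟨residTr, R⟩

end RPESData

/-
A residual `R \ t` is `R` restricted to fewer events, some of which have also lost their
reversibility. The events of `last(t)` that are no longer in `R \ t` are committed for good, and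
everything that has disappeared is explained by them: a removed event is committed or in conflict
with a committed one, and an event that lost its reversibility is prevented by a committed event or
has a reverse cause in conflict with one. Under this invariant a step `A ∪ B̲` is enabled at
`last(t)` in `R` iff it is enabled at the initial configuration `last(t) ∩ (R \ t)` of `R \ t`, and
one more step preserves it. Cause-respecting is needed in the direction from `R \ t` back to `R`:
a cause of an enabled event that is in conflict with a committed event would, by heredity of
conflict along sustained causation, put that event itself in conflict with it.
-/

namespace RPESData

variable {E L : Type}

def committed (R : RPESData E L) (A : Set E) : Set E :=
  (A \ R.F) ∪ {a | a ∈ R.F ∧ ∃ x ∈ A \ R.F, R.lt a x}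

def discarded (R : RPESData E L) (A : Set E) : Set E :=
  {e | e ∈ R.carrier ∧ ∃ a ∈ R.committed A, R.conf e a}

lemma residStep_carrier (R : RPESData E L) (A B : Set E) :
    (R.residStep A B).carrier = R.carrier \ (R.committed A ∪ R.discarded A) := rfl

lemma residStep_F (R : RPESData E L) (A B : Set E) :
    (R.residStep A B).F = (R.F ∩ (R.residStep A B).carrier) \
      ({e | e ∈ R.F ∧ ∃ a ∈ R.discarded A, R.rc a e} ∪
        {e | e ∈ R.F ∧ ∃ a ∈ R.committed A, R.prev a e}) := rfl

lemma residStep_C0 (R : RPESData E L) (A B : Set E) :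
    (R.residStep A B).C0 = ((R.C0 \ B) ∪ A) ∩ (R.residStep A B).carrier := rfl

lemma not_mem_residStep_carrier {R : RPESData E L} {A B : Set E} {x : E} :
    x ∉ (R.residStep A B).carrier ↔ x ∉ R.carrier ∨ x ∈ R.committed A ∨ x ∈ R.discarded A := by
  rw [residStep_carrier, Set.mem_sdiff, Set.mem_union]
  tauto

structure IsRestriction (R R' : RPESData E L) : Prop where
  carrier_subset : R'.carrier ⊆ R.carrier
  F_subset : R'.F ⊆ R.F ∩ R'.carrier
  lt_iff : ∀ a b, R'.lt a b ↔ R.lt a b ∧ a ∈ R'.carrier ∧ b ∈ R'.carrier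
  conf_iff : ∀ a b, R'.conf a b ↔ R.conf a b ∧ a ∈ R'.carrier ∧ b ∈ R'.carrier
  rc_iff : ∀ a b, R'.rc a b ↔ R.rc a b ∧ a ∈ R'.carrier ∧ b ∈ R'.F
  prev_iff : ∀ a b, R'.prev a b ↔ R.prev a b ∧ a ∈ R'.carrier ∧ b ∈ R'.F
  label_eq : R'.label = R.label

namespace IsRestriction

lemma refl {R : RPESData E L} (h : R.IsRPES) : IsRestriction R R where
  carrier_subset := subset_rfl
  F_subset _ he := ⟨he, h.F_carrier he⟩
  lt_iff a b := ⟨fun hl => ⟨hl, h.lt_carrier a b hl⟩, And.left⟩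
  conf_iff a b := ⟨fun hc => ⟨hc, h.conf_carrier a b hc⟩, And.left⟩
  rc_iff a b := ⟨fun hr => ⟨hr, h.rc_carrier a b hr⟩, And.left⟩
  prev_iff a b := ⟨fun hp => ⟨hp, h.prev_carrier a b hp⟩, And.left⟩
  label_eq := rfl

lemma trans {R R' R'' : RPESData E L} (h₁ : IsRestriction R R') (h₂ : IsRestriction R' R'') :
    IsRestriction R R'' where
  carrier_subset := h₂.carrier_subset.trans h₁.carrier_subset
  F_subset e he := ⟨(h₁.F_subset (h₂.F_subset he).1).1, (h₂.F_subset he).2⟩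
  lt_iff a b := by
    have := @h₂.carrier_subset
    rw [h₂.lt_iff, h₁.lt_iff]
    grind
  conf_iff a b := by
    have := @h₂.carrier_subset
    rw [h₂.conf_iff, h₁.conf_iff]
    grind
  rc_iff a b := by
    have := @h₂.carrier_subset
    have := fun x hx => (h₂.F_subset (a := x) hx).1
    rw [h₂.rc_iff, h₁.rc_iff]
    grind
  prev_iff a b := by
    have := @h₂.carrier_subset
    have := fun x hx => (h₂.F_subset (a := x) hx).1
    rw [h₂.prev_iff, h₁.prev_iff]
    grind
  label_eq := h₂.label_eq.trans h₁.label_eq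

lemma residStep (R : RPESData E L) (A B : Set E) : IsRestriction R (R.residStep A B) where
  carrier_subset := Set.sdiff_subset
  F_subset _ he := he.1
  lt_iff _ _ := Iff.rfl
  conf_iff _ _ := Iff.rfl
  rc_iff _ _ := Iff.rfl
  prev_iff _ _ := Iff.rfl
  label_eq := rfl

end IsRestriction

lemma stepLabel_congr {R R' : RPESData E L} (hlab : R'.label = R.label) (A B : Set E) :
    R'.stepLabel A B = R.stepLabel A B := by
  unfold stepLabel
  rw [hlab]

/-- The events of `C` outside `R'.carrier` are the ones committed for good. -/
structure IsResidualAt (R : RPESData E L) (C : Set E) (R' : RPESData E L) : Prop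
    extends IsRestriction R R' where
  C0_eq : R'.C0 = C ∩ R'.carrier
  subset_carrier : C ⊆ R.carrier
  conflictFree : R.ConflictFree C
  mem_or_conf_of_removed : ∀ e ∈ R.carrier, e ∉ R'.carrier →
    e ∈ C ∨ ∃ d ∈ C, d ∉ R'.carrier ∧ R.conf e d
  not_conf_of_removed : ∀ x ∈ C, x ∉ R'.carrier → ∀ y ∈ R'.carrier, ¬ R.conf x y
  prevented_or_conf_of_not_mem_F : ∀ e ∈ R.F, e ∉ R'.F →
    (∃ a ∈ C, a ∉ R'.carrier ∧ R.prev a e) ∨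
      ∃ a d, R.rc a e ∧ d ∈ C ∧ d ∉ R'.carrier ∧ R.conf a d
  rc_mem_of_removed : ∀ e ∈ R'.F, ∀ a, a ∉ R'.carrier → R.rc a e → a ∈ C
  prev_not_mem_of_removed : ∀ e ∈ R'.F, ∀ a, a ∉ R'.carrier → R.prev a e → a ∉ C

namespace IsResidualAt

variable {R R' : RPESData E L} {C A B : Set E}

lemma init (h : R.IsRPES) : IsResidualAt R R.C0 R where
  toIsRestriction := IsRestriction.refl h
  C0_eq := (Set.inter_eq_left.mpr h.C0_carrier).symm
  subset_carrier := h.C0_carrier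
  conflictFree := h.C0_cf
  mem_or_conf_of_removed _ he hne := absurd he hne
  not_conf_of_removed _ hx hne _ _ _ := hne (h.C0_carrier hx)
  prevented_or_conf_of_not_mem_F _ he hne := absurd he hne
  rc_mem_of_removed e _ a ha hrc := absurd (h.rc_carrier a e hrc).1 ha
  prev_not_mem_of_removed e _ a ha hp := absurd (h.prev_carrier a e hp).1 ha

lemma subset_carrier_of_enabled (inv : IsResidualAt R C R') (hen : R.Enabled C A B) :
    A ⊆ R'.carrier := by
  obtain ⟨-, -, hA, -, hAC, -, hcf, -⟩ := hen
  intro e he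
  by_contra hne
  rcases inv.mem_or_conf_of_removed e (hA he) hne with heC | ⟨d, hdC, -, hconf⟩
  · exact (Set.eq_empty_iff_forall_notMem.mp hAC) e ⟨he, heC⟩
  · exact hcf e (.inr he) d (.inl hdC) hconf

lemma subset_F_of_enabled (inv : IsResidualAt R C R') (hen : R.Enabled C A B) :
    B ⊆ R'.F := by
  obtain ⟨-, -, -, hBF, -, -, hcf, -, hrc, hprev⟩ := hen
  intro e he
  by_contra hne
  rcases inv.prevented_or_conf_of_not_mem_F e (hBF he) hne with
    ⟨a, haC, -, hp⟩ | ⟨a, d, hr, hdC, -, hconf⟩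
  · exact hprev e he a hp (.inl haC)
  · exact hcf a (.inl (hrc e he a hr).1) d (.inl hdC) hconf

lemma enabled (inv : IsResidualAt R C R') (hen : R.Enabled C A B) : R'.Enabled R'.C0 A B := by
  have hA := inv.subset_carrier_of_enabled hen
  have hB := inv.subset_F_of_enabled hen
  obtain ⟨hAf, hBf, -, -, hAC, hBC, hcf, hlt, hrc, hprev⟩ := hen
  have hC0 : C ∩ R'.carrier ∪ A ⊆ C ∪ A := Set.union_subset_union_left A Set.inter_subset_left
  rw [inv.C0_eq]
  refine ⟨hAf, hBf, hA, hB, ?_, ?_, ?_, ?_, ?_, ?_⟩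
  · rw [← Set.inter_assoc, hAC, Set.empty_inter]
  · exact fun e he => ⟨hBC he, (inv.F_subset (hB he)).2⟩
  · intro x hx y hy hconf
    exact hcf x (hC0 hx) y (hC0 hy) ((inv.conf_iff x y).mp hconf).1
  · intro e he e' hl
    obtain ⟨hl, he', -⟩ := (inv.lt_iff e' e).mp hl
    exact ⟨⟨(hlt e he e' hl).1, he'⟩, (hlt e he e' hl).2⟩
  · intro e he e' hr
    obtain ⟨hr, he', -⟩ := (inv.rc_iff e' e).mp hr
    exact ⟨⟨(hrc e he e' hr).1, he'⟩, (hrc e he e' hr).2⟩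
  · intro e he e' hp hmem
    exact hprev e he e' ((inv.prev_iff e' e).mp hp).1 (hC0 hmem)

lemma conflictFree_of_enabled (h : R.IsRPES) (inv : IsResidualAt R C R')
    (hen' : R'.Enabled R'.C0 A B) : R.ConflictFree (C ∪ A) := by
  obtain ⟨-, -, hA, -, -, -, hcf, -⟩ := hen'
  rw [inv.C0_eq] at hcf
  have hCA : ∀ x ∈ C ∪ A, x ∉ R'.carrier → x ∈ C :=
    fun x hx hx' => hx.resolve_right fun hxA => hx' (hA hxA)
  have hremoved : ∀ x ∈ C ∪ A, ∀ y ∈ C ∪ A, x ∉ R'.carrier → ¬ R.conf x y := by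
    intro x hx y hy hx'
    by_cases hy' : y ∈ R'.carrier
    · exact inv.not_conf_of_removed x (hCA x hx hx') hx' y hy'
    · exact inv.conflictFree x (hCA x hx hx') y (hCA y hy hy')
  intro x hx y hy hconf
  by_cases hx' : x ∈ R'.carrier
  · by_cases hy' : y ∈ R'.carrier
    · refine hcf x ?_ y ?_ ((inv.conf_iff x y).mpr ⟨hconf, hx', hy'⟩)
      exacts [hx.imp (⟨·, hx'⟩) id, hy.imp (⟨·, hy'⟩) id]
    · exact hremoved y hy x hx hy' (h.conf_symm x y hconf)
  · exact hremoved x hx y hy hx' hconf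

lemma enabled_of_enabled (h : R.IsRPES) (hcr : R.CauseRespecting) (inv : IsResidualAt R C R')
    (hen' : R'.Enabled R'.C0 A B) : R.Enabled C A B := by
  have hcf := inv.conflictFree_of_enabled h hen'
  obtain ⟨hAf, hBf, hA, hB, hAC, hBC, -, hlt, hrc, hprev⟩ := hen'
  rw [inv.C0_eq] at hAC hBC hlt hrc hprev
  have hBcar : B ⊆ R'.carrier := fun e he => (inv.F_subset (hB he)).2
  refine ⟨hAf, hBf, hA.trans inv.carrier_subset, fun e he => (inv.F_subset (hB he)).1, ?_,
    fun e he => (hBC he).1, hcf, ?_, ?_, ?_⟩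
  · rw [← Set.inter_eq_left.mpr hA, Set.inter_right_comm, Set.inter_assoc, hAC]
  · intro e he e' hl
    by_cases he' : e' ∈ R'.carrier
    · obtain ⟨⟨he'C, -⟩, he'B⟩ := hlt e he e' ((inv.lt_iff e' e).mpr ⟨hl, he', hA he⟩)
      exact ⟨he'C, he'B⟩
    · rcases inv.mem_or_conf_of_removed e' (h.lt_carrier e' e hl).1 he' with
        he'C | ⟨d, hdC, hd, hconf⟩
      · exact ⟨he'C, fun he'B => he' (hBcar he'B)⟩
      · have hde : R.conf d e := h.conf_hered_sc d e' e (h.conf_symm e' d hconf) (hcr e' e hl)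
        exact absurd hde (inv.not_conf_of_removed d hdC hd e (hA he))
  · intro e he e' hr
    by_cases he' : e' ∈ R'.carrier
    · obtain ⟨⟨he'C, -⟩, he'B⟩ := hrc e he e' ((inv.rc_iff e' e).mpr ⟨hr, he', hB he⟩)
      exact ⟨he'C, he'B⟩
    · exact ⟨inv.rc_mem_of_removed e (hB he) e' he' hr, fun he'B => he' (hBcar he'B.1)⟩
  · intro e he e' hp he'CA
    by_cases he' : e' ∈ R'.carrier
    · refine hprev e he e' ((inv.prev_iff e' e).mpr ⟨hp, he', hB he⟩) ?_
      exact he'CA.imp (⟨·, he'⟩) id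
    · refine inv.prev_not_mem_of_removed e (hB he) e' he' hp ?_
      exact he'CA.resolve_right fun he'A => he' (hA he'A)

lemma committed_subset_carrier (inv : IsResidualAt R C R') (hen : R.Enabled C A B) :
    R'.committed A ⊆ R'.carrier := by
  rintro a (ha | ha)
  exacts [inv.subset_carrier_of_enabled hen ha.1, (inv.F_subset ha.1).2]

lemma committed_subset (inv : IsResidualAt R C R') (hen : R.Enabled C A B) :
    R'.committed A ⊆ (C \ B) ∪ A := by
  obtain ⟨-, -, -, -, -, -, -, hlt, -⟩ := hen
  rintro a (ha | ⟨-, x, hx, hl⟩)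
  exacts [.inr ha.1, .inl (hlt x hx.1 a ((inv.lt_iff a x).mp hl).1)]

lemma not_mem_of_mem_discarded (inv : IsResidualAt R C R') (hen : R.Enabled C A B) {e : E}
    (he : e ∈ R'.discarded A) : e ∉ (C \ B) ∪ A := by
  obtain ⟨-, a, ha, hconf⟩ := he
  have hsub : (C \ B) ∪ A ⊆ C ∪ A := Set.union_subset_union_left A Set.sdiff_subset
  have hcf : R.ConflictFree (C ∪ A) := hen.2.2.2.2.2.2.1
  exact fun heC => hcf e (hsub heC) a (hsub (inv.committed_subset hen ha))
    ((inv.conf_iff e a).mp hconf).1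

lemma mem_step_of_removed (inv : IsResidualAt R C R') (hen : R.Enabled C A B) {x : E}
    (hx : x ∈ C) (hx' : x ∉ R'.carrier) : x ∈ (C \ B) ∪ A :=
  .inl ⟨hx, fun hxB => hx' (inv.F_subset (inv.subset_F_of_enabled hen hxB)).2⟩

lemma mem_of_mem_step_of_removed (inv : IsResidualAt R C R') (hen : R.Enabled C A B) {x : E}
    (hx : x ∈ (C \ B) ∪ A) (hx' : x ∉ R'.carrier) : x ∈ C :=
  hx.elim (·.1) fun hxA => absurd (inv.subset_carrier_of_enabled hen hxA) hx'

lemma mem_or_conf_of_removed_step (inv : IsResidualAt R C R') (hen : R.Enabled C A B) :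
    ∀ e ∈ R.carrier, e ∉ (R'.residStep A B).carrier →
      e ∈ (C \ B) ∪ A ∨ ∃ d ∈ (C \ B) ∪ A, d ∉ (R'.residStep A B).carrier ∧ R.conf e d := by
  intro e he hne
  rcases not_mem_residStep_carrier.mp hne with he' | he' | ⟨-, a, ha, hconf⟩
  · rcases inv.mem_or_conf_of_removed e he he' with heC | ⟨d, hdC, hd, hconf⟩
    · exact .inl (inv.mem_step_of_removed hen heC he')
    · exact .inr ⟨d, inv.mem_step_of_removed hen hdC hd,
        not_mem_residStep_carrier.mpr (.inl hd), hconf⟩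
  · exact .inl (inv.committed_subset hen he')
  · exact .inr ⟨a, inv.committed_subset hen ha, not_mem_residStep_carrier.mpr (.inr (.inl ha)),
      ((inv.conf_iff e a).mp hconf).1⟩

lemma not_conf_of_removed_step (h : R.IsRPES) (inv : IsResidualAt R C R')
    (hen : R.Enabled C A B) :
    ∀ x ∈ (C \ B) ∪ A, x ∉ (R'.residStep A B).carrier →
      ∀ y ∈ (R'.residStep A B).carrier, ¬ R.conf x y := by
  intro x hx hx' y hy hconf
  have hy' : y ∈ R'.carrier := (IsRestriction.residStep R' A B).carrier_subset hy
  rcases not_mem_residStep_carrier.mp hx' with hx' | hx' | hx'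
  · exact inv.not_conf_of_removed x (inv.mem_of_mem_step_of_removed hen hx hx') hx' y hy' hconf
  · have hdisc : y ∈ R'.discarded A := ⟨hy', x, hx',
      (inv.conf_iff y x).mpr ⟨h.conf_symm x y hconf, hy', inv.committed_subset_carrier hen hx'⟩⟩
    exact not_mem_residStep_carrier.mpr (.inr (.inr hdisc)) hy
  · exact inv.not_mem_of_mem_discarded hen hx' hx

lemma prevented_or_conf_of_not_mem_F_step (h : R.IsRPES) (hcr : R.CauseRespecting)
    (inv : IsResidualAt R C R') (hen : R.Enabled C A B) :
    ∀ e ∈ R.F, e ∉ (R'.residStep A B).F →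
      (∃ a ∈ (C \ B) ∪ A, a ∉ (R'.residStep A B).carrier ∧ R.prev a e) ∨
        ∃ a d, R.rc a e ∧ d ∈ (C \ B) ∪ A ∧ d ∉ (R'.residStep A B).carrier ∧ R.conf a d := by
  intro e he hne
  have hcomm {a : E} (ha : a ∈ R'.committed A) : a ∉ (R'.residStep A B).carrier :=
    not_mem_residStep_carrier.mpr (.inr (.inl ha))
  by_cases heF : e ∈ R'.F
  · by_cases he' : e ∈ (R'.residStep A B).carrier
    · rw [residStep_F] at hne
      rcases not_not.mp fun hcon => hne ⟨⟨heF, he'⟩, hcon⟩ with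
        ⟨-, a, ⟨-, d, hd, hconf⟩, hr⟩ | ⟨-, a, ha, hp⟩
      · exact .inr ⟨a, d, ((inv.rc_iff a e).mp hr).1, inv.committed_subset hen hd, hcomm hd,
          ((inv.conf_iff a d).mp hconf).1⟩
      · exact .inl ⟨a, inv.committed_subset hen ha, hcomm ha, ((inv.prev_iff a e).mp hp).1⟩
    · rcases not_mem_residStep_carrier.mp he' with he' | (⟨-, he'⟩ | ⟨-, x, hx, hl⟩) |
        ⟨-, a, ha, hconf⟩
      · exact absurd (inv.F_subset heF).2 he'
      · exact absurd heF he'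
      · -- `e < x` with `x` irreversible, so cause-respect gives `x ▷ e̲`
        have hx' : x ∈ R'.committed A := .inl hx
        exact .inl ⟨x, inv.committed_subset hen hx', hcomm hx',
          (hcr e x ((inv.lt_iff e x).mp hl).1).2 he⟩
      · exact .inr ⟨e, a, h.rc_refl e he, inv.committed_subset hen ha, hcomm ha,
          ((inv.conf_iff e a).mp hconf).1⟩
  · rcases inv.prevented_or_conf_of_not_mem_F e he heF with
      ⟨a, haC, ha, hp⟩ | ⟨a, d, hr, hdC, hd, hconf⟩
    · exact .inl ⟨a, inv.mem_step_of_removed hen haC ha,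
        not_mem_residStep_carrier.mpr (.inl ha), hp⟩
    · exact .inr ⟨a, d, hr, inv.mem_step_of_removed hen hdC hd,
        not_mem_residStep_carrier.mpr (.inl hd), hconf⟩

lemma rc_mem_of_removed_step (inv : IsResidualAt R C R') (hen : R.Enabled C A B) :
    ∀ e ∈ (R'.residStep A B).F, ∀ a, a ∉ (R'.residStep A B).carrier → R.rc a e →
      a ∈ (C \ B) ∪ A := by
  intro e he a ha hr
  have heF : e ∈ R'.F := ((IsRestriction.residStep R' A B).F_subset he).1
  rcases not_mem_residStep_carrier.mp ha with ha' | ha' | ha'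
  · exact inv.mem_step_of_removed hen (inv.rc_mem_of_removed e heF a ha' hr) ha'
  · exact inv.committed_subset hen ha'
  · exact absurd (.inl ⟨heF, a, ha', (inv.rc_iff a e).mpr ⟨hr, ha'.1, heF⟩⟩) he.2

lemma prev_not_mem_of_removed_step (inv : IsResidualAt R C R') (hen : R.Enabled C A B) :
    ∀ e ∈ (R'.residStep A B).F, ∀ a, a ∉ (R'.residStep A B).carrier → R.prev a e →
      a ∉ (C \ B) ∪ A := by
  intro e he a ha hp haC
  have heF : e ∈ R'.F := ((IsRestriction.residStep R' A B).F_subset he).1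
  rcases not_mem_residStep_carrier.mp ha with ha' | ha' | ha'
  · exact inv.prev_not_mem_of_removed e heF a ha' hp (inv.mem_of_mem_step_of_removed hen haC ha')
  · exact he.2 (.inr ⟨heF, a, ha',
      (inv.prev_iff a e).mpr ⟨hp, inv.committed_subset_carrier hen ha', heF⟩⟩)
  · exact inv.not_mem_of_mem_discarded hen ha' haC

lemma step (h : R.IsRPES) (hcr : R.CauseRespecting) (inv : IsResidualAt R C R')
    (hen : R.Enabled C A B) : IsResidualAt R ((C \ B) ∪ A) (R'.residStep A B) where
  toIsRestriction := inv.toIsRestriction.trans (IsRestriction.residStep R' A B)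
  C0_eq := by
    have hsub := (IsRestriction.residStep R' A B).carrier_subset
    rw [residStep_C0, inv.C0_eq]
    ext x
    simp only [Set.mem_inter_iff, Set.mem_union, Set.mem_sdiff]
    grind
  subset_carrier := by
    obtain ⟨-, -, hA, -⟩ := hen
    exact Set.union_subset (Set.sdiff_subset.trans inv.subset_carrier) hA
  conflictFree := by
    obtain ⟨-, -, -, -, -, -, hcf, -⟩ := hen
    exact fun x hx y hy => hcf x (Set.union_subset_union_left A Set.sdiff_subset hx) y
      (Set.union_subset_union_left A Set.sdiff_subset hy)
  mem_or_conf_of_removed := inv.mem_or_conf_of_removed_step hen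
  not_conf_of_removed := inv.not_conf_of_removed_step h hen
  prevented_or_conf_of_not_mem_F := inv.prevented_or_conf_of_not_mem_F_step h hcr hen
  rc_mem_of_removed := inv.rc_mem_of_removed_step hen
  prev_not_mem_of_removed := inv.prev_not_mem_of_removed_step hen

lemma resid_of_isTraceFrom (h : R.IsRPES) (hcr : R.CauseRespecting) :
    ∀ {t : List (Set E × Set E)} {C C' : Set E} {R' : RPESData E L},
      IsResidualAt R C R' → R.IsTraceFrom C t C' → IsResidualAt R C' (R'.resid t)
  | [], _, _, _, inv, ht => ht ▸ inv
  | _ :: t, _, _, _, inv, ht => resid_of_isTraceFrom h hcr (t := t) (inv.step h hcr ht.1) ht.2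

end IsResidualAt

variable {R : RPESData E L}

lemma isResidualAt_resid (h : R.IsRPES) (hcr : R.CauseRespecting)
    {t : List (Set E × Set E)} {C : Set E} (ht : R.IsTraceTo t C) :
    IsResidualAt R C (R.resid t) :=
  (IsResidualAt.init h).resid_of_isTraceFrom h hcr ht

lemma IsTraceFrom.append {A B : Set E} :
    ∀ {t : List (Set E × Set E)} {C C' : Set E}, R.IsTraceFrom C t C' → R.Enabled C' A B →
      R.IsTraceFrom C (t ++ [(A, B)]) ((C' \ B) ∪ A)
  | [], _, _, ht, hen => ht ▸ ⟨hen, rfl⟩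
  | _ :: _, _, _, ht, hen => ⟨ht.1, ht.2.append hen⟩

lemma resid_append (t : List (Set E × Set E)) (A B : Set E) :
    R.resid (t ++ [(A, B)]) = (R.resid t).residStep A B := by
  simp only [resid, List.foldl_append, List.foldl_cons, List.foldl_nil]

lemma ReachConf.of_isTraceFrom :
    ∀ {t : List (Set E × Set E)} {C C' : Set E}, R.ReachConf C → R.IsTraceFrom C t C' →
      R.ReachConf C'
  | [], _, _, hC, ht => ht ▸ hC
  | _ :: _, _, _, hC, ht => (ReachConf.step _ _ _ hC ht.1).of_isTraceFrom ht.2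

end RPESData

/-- For a cause-respecting RPES `R`, the configuration transition
system `TC(R)` and the residual transition system `TE(R)` are bisimilar via
`Rl = {(last(t), R \ t) | t ∈ Traces(R)}`. -/
theorem TC_TE_bisimilar {E L : Type} (R : RPESData E L) (h : R.IsRPES)
    (hcr : R.CauseRespecting) :
    IsBisimulation R.TC R.TE
      (fun C F => ∃ t, R.IsTraceTo t C ∧ F = R.resid t) := by
  refine ⟨⟨[], rfl, rfl⟩, ?_, ?_⟩
  · rintro C _ ⟨t, ht, rfl⟩ _ _ ⟨-, A, B, hen, rfl, rfl⟩
    have inv := RPESData.isResidualAt_resid h hcr ht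
    exact ⟨_, ⟨A, B, inv.enabled hen, rfl, (RPESData.stepLabel_congr inv.label_eq A B).symm⟩,
      t ++ [(A, B)], ht.append hen, (RPESData.resid_append t A B).symm⟩
  · rintro C _ ⟨t, ht, rfl⟩ _ _ ⟨A, B, hen', rfl, rfl⟩
    have inv := RPESData.isResidualAt_resid h hcr ht
    have hen := inv.enabled_of_enabled h hcr hen'
    exact ⟨_, ⟨RPESData.ReachConf.init.of_isTraceFrom ht, A, B, hen, rfl,
      RPESData.stepLabel_congr inv.label_eq A B⟩, t ++ [(A, B)], ht.append hen,
      (RPESData.resid_append t A B).symm⟩
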